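/- Let σ₁ < σ₂ be real numbers, let q : ℝ → ℝ be continuous, and let u, v : ℝ → ℝ be twice continuously differentiable functions satisfying u'' + q·u = 0 and v'' + q·v = 0 on (σ₁,σ₂), whose Wronskian u·v' − u'·v is equal to a constant W > 0 on (σ₁,σ₂). Then there exists a constant C ∈ ℝ such that, defining ψ(t) = C + ∫_{σ₁}^{t} W/((u(s))² + (v(s))²) ds, one has u(t) = √W · cos(ψ(t))/√(ψ'(t)) and v(t) = √W · sin(ψ(t))/√(ψ'(t)) for every t ∈ (σ₁,σ₂). -/

import Mathlib

/-!
As the Wronskian `W` does not vanish, `u² + v² > 0`, and by Lagrange's identity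
`W² ≤ (u² + v²) (u'² + v'²)`. If `|q| ≤ M` on `[σ₁, σ₂]`, the energy `E = y² + y'²` of a
solution satisfies `E' ≥ -(1 + M) E`, so it stays bounded as `t ↓ σ₁`. Hence `u² + v²` is
bounded below near `σ₁`, the integral defining `ψ` exists, and `ψ' = W / (u² + v²)`.
With `r = √(u² + v²)`, the functions `u cos ψ + v sin ψ` and `v cos ψ - u sin ψ` are constant
multiples of `r`; choosing `C` so that `ψ(t₀)` is the polar angle of `(u t₀, v t₀)` makes
them `r` and `0`, i.e. `(u, v) = r (cos ψ, sin ψ)`, and `r = √W / √ψ'`.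
-/

open Real Set MeasureTheory

theorem ContDiffOn.hasDerivAt_deriv {n : WithTop ℕ∞} {s : Set ℝ} {f : ℝ → ℝ} {t : ℝ}
    (hf : ContDiffOn ℝ n f s) (hs : IsOpen s) (hn : n ≠ 0) (ht : t ∈ s) :
    HasDerivAt f (deriv f t) t :=
  ((hf.differentiableOn hn).differentiableAt (hs.mem_nhds ht)).hasDerivAt

theorem ContinuousOn.intervalIntegrable_of_norm_le {E : Type*} [NormedAddCommGroup E]
    {f : ℝ → E} {a b C : ℝ} (hab : a ≤ b) (hf : ContinuousOn f (Ioo a b))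
    (hC : ∀ t ∈ Ioo a b, ‖f t‖ ≤ C) : IntervalIntegrable f volume a b := by
  rw [intervalIntegrable_iff_integrableOn_Ioo_of_le hab]
  exact .of_bound measure_Ioo_lt_top (hf.aestronglyMeasurable measurableSet_Ioo) C
    (ae_restrict_of_forall_mem measurableSet_Ioo hC)

theorem sq_add_sq_pos_of_mul_sub_mul_ne_zero {a b c d : ℝ} (h : a * d - c * b ≠ 0) :
    0 < a ^ 2 + b ^ 2 := by
  by_contra! h0
  obtain ⟨rfl, rfl⟩ : a = 0 ∧ b = 0 := ⟨by nlinarith, by nlinarith⟩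
  simp at h

theorem exists_eq_sqrt_mul_cos_and_sin (x y : ℝ) :
    ∃ θ, x = √(x ^ 2 + y ^ 2) * cos θ ∧ y = √(x ^ 2 + y ^ 2) * sin θ := by
  have hnorm : ‖(⟨x, y⟩ : ℂ)‖ = √(x ^ 2 + y ^ 2) := by
    rw [Complex.norm_def, Complex.normSq_mk]; ring_nf
  refine ⟨Complex.arg ⟨x, y⟩, ?_, ?_⟩ <;> rw [← hnorm]
  · exact (Complex.norm_mul_cos_arg ⟨x, y⟩).symm
  · exact (Complex.norm_mul_sin_arg ⟨x, y⟩).symm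

theorem hasDerivAt_div_zero_of_hasDerivAt_mul_self {f g : ℝ → ℝ} {c x : ℝ}
    (hf : HasDerivAt f (c * f x) x) (hg : HasDerivAt g (c * g x) x) (hgx : g x ≠ 0) :
    HasDerivAt (fun t => f t / g t) 0 x :=
  (hf.div hg hgx).congr_deriv (by ring)

section Energy

variable {a b M : ℝ} {q y y' : ℝ → ℝ}

theorem monotoneOn_energy_mul_exp (hy : ∀ t ∈ Ioo a b, HasDerivAt y (y' t) t)
    (hy' : ∀ t ∈ Ioo a b, HasDerivAt y' (-(q t * y t)) t) (hq : ∀ t ∈ Ioo a b, |q t| ≤ M) :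
    MonotoneOn (fun t => (y t ^ 2 + y' t ^ 2) * exp ((1 + M) * t)) (Ioo a b) := by
  have hderiv : ∀ t ∈ Ioo a b, HasDerivAt (fun t => (y t ^ 2 + y' t ^ 2) * exp ((1 + M) * t))
      (((1 + M) * (y t ^ 2 + y' t ^ 2) + 2 * (1 - q t) * (y t * y' t)) * exp ((1 + M) * t)) t := by
    intro t ht
    have hexp := ((hasDerivAt_id t).const_mul (1 + M)).exp
    refine ((((hy t ht).fun_pow 2).fun_add ((hy' t ht).fun_pow 2)).fun_mul hexp).congr_deriv ?_
    simp only [id]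
    ring
  refine monotoneOn_of_deriv_nonneg (convex_Ioo a b)
    (fun t ht => (hderiv t ht).continuousAt.continuousWithinAt) ?_ ?_ <;> rw [interior_Ioo]
  · exact fun t ht => (hderiv t ht).differentiableAt.differentiableWithinAt
  · intro t ht
    rw [(hderiv t ht).deriv]
    obtain ⟨hqM, hMq⟩ := abs_le.1 (hq t ht)
    -- the left side is `((2 + M - q) (y + y')² + (M + q) (y - y')²) / 2`
    have hcomb : 0 ≤ (1 + M) * (y t ^ 2 + y' t ^ 2) + 2 * (1 - q t) * (y t * y' t) := by
      nlinarith [mul_nonneg (by linarith : 0 ≤ 2 + M - q t) (sq_nonneg (y t + y' t)),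
        mul_nonneg (by linarith : 0 ≤ M + q t) (sq_nonneg (y t - y' t))]
    positivity

theorem exists_energy_le_of_mem_Ioc (hy : ∀ t ∈ Ioo a b, HasDerivAt y (y' t) t)
    (hy' : ∀ t ∈ Ioo a b, HasDerivAt y' (-(q t * y t)) t) (hq : ∀ t ∈ Ioo a b, |q t| ≤ M)
    {x : ℝ} (hx : x ∈ Ioo a b) : ∃ K, ∀ t ∈ Ioc a x, y t ^ 2 + y' t ^ 2 ≤ K := by
  have hM : 0 ≤ 1 + M := by linarith [(abs_nonneg _).trans (hq x hx)]
  refine ⟨(y x ^ 2 + y' x ^ 2) * exp ((1 + M) * (x - a)), fun t ht => ?_⟩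
  have hmono := monotoneOn_energy_mul_exp hy hy' hq ⟨ht.1, ht.2.trans_lt hx.2⟩ hx ht.2
  calc y t ^ 2 + y' t ^ 2 ≤ (y x ^ 2 + y' x ^ 2) * exp ((1 + M) * (x - t)) := by
        rwa [mul_sub, exp_sub, ← mul_div_assoc, le_div_iff₀ (exp_pos _)]
    _ ≤ (y x ^ 2 + y' x ^ 2) * exp ((1 + M) * (x - a)) := by
        gcongr
        exact ht.1.le

end Energy

section WronskianPair

variable {a b M W : ℝ} {q u u' v v' : ℝ → ℝ}

theorem exists_pos_le_sq_add_sq_of_mem_Ioc (hu : ∀ t ∈ Ioo a b, HasDerivAt u (u' t) t)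
    (hu' : ∀ t ∈ Ioo a b, HasDerivAt u' (-(q t * u t)) t)
    (hv : ∀ t ∈ Ioo a b, HasDerivAt v (v' t) t)
    (hv' : ∀ t ∈ Ioo a b, HasDerivAt v' (-(q t * v t)) t) (hq : ∀ t ∈ Ioo a b, |q t| ≤ M)
    (hW : W ≠ 0) (hwronsk : ∀ t ∈ Ioo a b, u t * v' t - u' t * v t = W)
    {x : ℝ} (hx : x ∈ Ioo a b) : ∃ c > 0, ∀ t ∈ Ioc a x, c ≤ u t ^ 2 + v t ^ 2 := by
  obtain ⟨Ku, hKu⟩ := exists_energy_le_of_mem_Ioc hu hu' hq hx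
  obtain ⟨Kv, hKv⟩ := exists_energy_le_of_mem_Ioc hv hv' hq hx
  have hbound : ∀ t ∈ Ioc a x, W ^ 2 ≤ (u t ^ 2 + v t ^ 2) * (Ku + Kv) := by
    intro t ht
    calc W ^ 2 = (u t * v' t - u' t * v t) ^ 2 := by rw [hwronsk t ⟨ht.1, ht.2.trans_lt hx.2⟩]
      _ ≤ (u t ^ 2 + v t ^ 2) * (u' t ^ 2 + v' t ^ 2) := by
          nlinarith [sq_nonneg (u t * u' t + v t * v' t)]
      _ ≤ (u t ^ 2 + v t ^ 2) * (Ku + Kv) :=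
          mul_le_mul_of_nonneg_left (by nlinarith [hKu t ht, hKv t ht]) (by positivity)
  have hK : 0 < Ku + Kv :=
    pos_of_mul_pos_right ((by positivity : 0 < W ^ 2).trans_le (hbound x ⟨hx.1, le_rfl⟩))
      (by positivity)
  exact ⟨W ^ 2 / (Ku + Kv), by positivity, fun t ht => (div_le_iff₀ hK).2 (hbound t ht)⟩

theorem hasDerivAt_integral_div_sq_add_sq (hu : ∀ t ∈ Ioo a b, HasDerivAt u (u' t) t)
    (hu' : ∀ t ∈ Ioo a b, HasDerivAt u' (-(q t * u t)) t)
    (hv : ∀ t ∈ Ioo a b, HasDerivAt v (v' t) t)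
    (hv' : ∀ t ∈ Ioo a b, HasDerivAt v' (-(q t * v t)) t) (hq : ∀ t ∈ Ioo a b, |q t| ≤ M)
    (hW : W ≠ 0) (hwronsk : ∀ t ∈ Ioo a b, u t * v' t - u' t * v t = W)
    {x : ℝ} (hx : x ∈ Ioo a b) :
    HasDerivAt (fun x => ∫ s in a..x, W / (u s ^ 2 + v s ^ 2)) (W / (u x ^ 2 + v x ^ 2)) x := by
  have hρ : ∀ t ∈ Ioo a b, 0 < u t ^ 2 + v t ^ 2 := fun t ht =>
    sq_add_sq_pos_of_mul_sub_mul_ne_zero (by rwa [hwronsk t ht])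
  have hcont : ContinuousOn (fun s => W / (u s ^ 2 + v s ^ 2)) (Ioo a b) := by
    refine continuousOn_const.div (.add (.pow ?_ 2) (.pow ?_ 2)) fun t ht => (hρ t ht).ne'
    · exact fun t ht => (hu t ht).continuousAt.continuousWithinAt
    · exact fun t ht => (hv t ht).continuousAt.continuousWithinAt
  obtain ⟨c, hc, hcρ⟩ := exists_pos_le_sq_add_sq_of_mem_Ioc hu hu' hv hv' hq hW hwronsk hx
  have hint : IntervalIntegrable (fun s => W / (u s ^ 2 + v s ^ 2)) volume a x := by
    refine (hcont.mono (Ioo_subset_Ioo_right hx.2.le)).intervalIntegrable_of_norm_le hx.1.le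
      (C := |W| / c) fun t ht => ?_
    rw [norm_div, Real.norm_eq_abs, Real.norm_of_nonneg (hρ t ⟨ht.1, ht.2.trans hx.2⟩).le]
    gcongr
    exact hcρ t (Ioo_subset_Ioc_self ht)
  exact intervalIntegral.integral_hasDerivAt_right hint
    (hcont.stronglyMeasurableAtFilter isOpen_Ioo x hx) (hcont.continuousAt (isOpen_Ioo.mem_nhds hx))

end WronskianPair

section Phase

variable {u v ψ : ℝ → ℝ} {du dv x : ℝ}

theorem hasDerivAt_sqrt_sq_add_sq (hu : HasDerivAt u du x) (hv : HasDerivAt v dv x)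
    (hx : u x ^ 2 + v x ^ 2 ≠ 0) :
    HasDerivAt (fun t => √(u t ^ 2 + v t ^ 2))
      ((u x * du + v x * dv) / (u x ^ 2 + v x ^ 2) * √(u x ^ 2 + v x ^ 2)) x := by
  refine ((hu.fun_pow 2).fun_add (hv.fun_pow 2)).sqrt hx |>.congr_deriv ?_
  have hr : √(u x ^ 2 + v x ^ 2) ≠ 0 := by positivity
  field_simp
  rw [sq_sqrt (by positivity)]
  ring

theorem hasDerivAt_mul_cos_add_mul_sin (hu : HasDerivAt u du x) (hv : HasDerivAt v dv x)
    (hψ : HasDerivAt ψ ((u x * dv - du * v x) / (u x ^ 2 + v x ^ 2)) x)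
    (hx : u x ^ 2 + v x ^ 2 ≠ 0) :
    HasDerivAt (fun t => u t * cos (ψ t) + v t * sin (ψ t))
      ((u x * du + v x * dv) / (u x ^ 2 + v x ^ 2) * (u x * cos (ψ x) + v x * sin (ψ x))) x := by
  refine ((hu.fun_mul hψ.cos).fun_add (hv.fun_mul hψ.sin)).congr_deriv ?_
  field_simp
  ring

theorem hasDerivAt_mul_cos_sub_mul_sin (hu : HasDerivAt u du x) (hv : HasDerivAt v dv x)
    (hψ : HasDerivAt ψ ((u x * dv - du * v x) / (u x ^ 2 + v x ^ 2)) x)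
    (hx : u x ^ 2 + v x ^ 2 ≠ 0) :
    HasDerivAt (fun t => v t * cos (ψ t) - u t * sin (ψ t))
      ((u x * du + v x * dv) / (u x ^ 2 + v x ^ 2) * (v x * cos (ψ x) - u x * sin (ψ x))) x := by
  refine ((hv.fun_mul hψ.cos).fun_sub (hu.fun_mul hψ.sin)).congr_deriv ?_
  field_simp
  ring

/-- `√(u² + v²)`, `u cos ψ + v sin ψ` and `v cos ψ - u sin ψ` share the logarithmic derivative
`(u u' + v v') / (u² + v²)`, so the last two are constant multiples of the first. -/
theorem eq_sqrt_mul_cos_and_sin_of_hasDerivAt_phase {s : Set ℝ} (hs : IsOpen s)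
    (hs' : IsPreconnected s) {u' v' : ℝ → ℝ} (hu : ∀ t ∈ s, HasDerivAt u (u' t) t)
    (hv : ∀ t ∈ s, HasDerivAt v (v' t) t) (hρ : ∀ t ∈ s, 0 < u t ^ 2 + v t ^ 2)
    (hψ : ∀ t ∈ s, HasDerivAt ψ ((u t * v' t - u' t * v t) / (u t ^ 2 + v t ^ 2)) t)
    {t₀ : ℝ} (ht₀ : t₀ ∈ s) (hu₀ : u t₀ = √(u t₀ ^ 2 + v t₀ ^ 2) * cos (ψ t₀))
    (hv₀ : v t₀ = √(u t₀ ^ 2 + v t₀ ^ 2) * sin (ψ t₀)) {t : ℝ} (ht : t ∈ s) :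
    u t = √(u t ^ 2 + v t ^ 2) * cos (ψ t) ∧ v t = √(u t ^ 2 + v t ^ 2) * sin (ψ t) := by
  set r := fun t => √(u t ^ 2 + v t ^ 2)
  set k := fun t => (u t * u' t + v t * v' t) / (u t ^ 2 + v t ^ 2)
  have hr0 (t) (ht : t ∈ s) : r t ≠ 0 := (sqrt_pos.2 (hρ t ht)).ne'
  have hconst (F : ℝ → ℝ) (hF : ∀ t ∈ s, HasDerivAt F (k t * F t) t) :
      F t / r t = F t₀ / r t₀ := by
    have hF' (t) (ht : t ∈ s) : HasDerivAt (fun t => F t / r t) 0 t :=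
      hasDerivAt_div_zero_of_hasDerivAt_mul_self (hF t ht)
        (hasDerivAt_sqrt_sq_add_sq (hu t ht) (hv t ht) (hρ t ht).ne') (hr0 t ht)
    exact hs.is_const_of_deriv_eq_zero hs'
      (fun t ht => (hF' t ht).differentiableAt.differentiableWithinAt)
      (fun t ht => (hF' t ht).deriv) ht ht₀
  have hP : u t * cos (ψ t) + v t * sin (ψ t) = r t := by
    have h := hconst _ fun t ht =>
      hasDerivAt_mul_cos_add_mul_sin (hu t ht) (hv t ht) (hψ t ht) (hρ t ht).ne'
    have h₀ : u t₀ * cos (ψ t₀) + v t₀ * sin (ψ t₀) = r t₀ := by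
      linear_combination cos (ψ t₀) * hu₀ + sin (ψ t₀) * hv₀ + r t₀ * sin_sq_add_cos_sq (ψ t₀)
    rwa [h₀, div_self (hr0 t₀ ht₀), div_eq_one_iff_eq (hr0 t ht)] at h
  have hQ : v t * cos (ψ t) - u t * sin (ψ t) = 0 := by
    have h := hconst _ fun t ht =>
      hasDerivAt_mul_cos_sub_mul_sin (hu t ht) (hv t ht) (hψ t ht) (hρ t ht).ne'
    have h₀ : v t₀ * cos (ψ t₀) - u t₀ * sin (ψ t₀) = 0 := by
      linear_combination cos (ψ t₀) * hv₀ - sin (ψ t₀) * hu₀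
    rw [h₀, zero_div, div_eq_zero_iff] at h
    exact h.resolve_right (hr0 t ht)
  constructor
  · linear_combination cos (ψ t) * hP - sin (ψ t) * hQ - u t * sin_sq_add_cos_sq (ψ t)
  · linear_combination sin (ψ t) * hP + cos (ψ t) * hQ - v t * sin_sq_add_cos_sq (ψ t)

end Phase

theorem solutions_representable_by_phase_function (σ₁ σ₂ : ℝ) (hσ : σ₁ < σ₂)
    (q u v : ℝ → ℝ) (hq : Continuous q)
    (hu : ContDiffOn ℝ 2 u (Ioo σ₁ σ₂)) (hv : ContDiffOn ℝ 2 v (Ioo σ₁ σ₂))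
    (hueq : ∀ t ∈ Ioo σ₁ σ₂, deriv (deriv u) t + q t * u t = 0)
    (hveq : ∀ t ∈ Ioo σ₁ σ₂, deriv (deriv v) t + q t * v t = 0)
    (W : ℝ) (hW : 0 < W)
    (hwronsk : ∀ t ∈ Ioo σ₁ σ₂, u t * deriv v t - deriv u t * v t = W) :
    ∃ C : ℝ, ∀ t ∈ Ioo σ₁ σ₂,
      u t = Real.sqrt W *
          Real.cos (C + ∫ s in σ₁..t, W / ((u s) ^ 2 + (v s) ^ 2)) /
          Real.sqrt (deriv (fun x => C + ∫ s in σ₁..x, W / ((u s) ^ 2 + (v s) ^ 2)) t) ∧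
      v t = Real.sqrt W *
          Real.sin (C + ∫ s in σ₁..t, W / ((u s) ^ 2 + (v s) ^ 2)) /
          Real.sqrt (deriv (fun x => C + ∫ s in σ₁..x, W / ((u s) ^ 2 + (v s) ^ 2)) t) := by
  have hI : IsOpen (Ioo σ₁ σ₂) := isOpen_Ioo
  have hu₁ (t) (ht : t ∈ Ioo σ₁ σ₂) : HasDerivAt u (deriv u t) t :=
    hu.hasDerivAt_deriv hI two_ne_zero ht
  have hv₁ (t) (ht : t ∈ Ioo σ₁ σ₂) : HasDerivAt v (deriv v t) t :=
    hv.hasDerivAt_deriv hI two_ne_zero ht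
  have hu₂ (t) (ht : t ∈ Ioo σ₁ σ₂) : HasDerivAt (deriv u) (-(q t * u t)) t :=
    ((hu.deriv_of_isOpen hI le_rfl).hasDerivAt_deriv hI one_ne_zero ht).congr_deriv
      (eq_neg_of_add_eq_zero_left (hueq t ht))
  have hv₂ (t) (ht : t ∈ Ioo σ₁ σ₂) : HasDerivAt (deriv v) (-(q t * v t)) t :=
    ((hv.deriv_of_isOpen hI le_rfl).hasDerivAt_deriv hI one_ne_zero ht).congr_deriv
      (eq_neg_of_add_eq_zero_left (hveq t ht))
  obtain ⟨M, hM⟩ := isCompact_Icc.exists_bound_of_continuousOn (s := Icc σ₁ σ₂) hq.continuousOn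
  have hqM (t) (ht : t ∈ Ioo σ₁ σ₂) : |q t| ≤ M := hM t (Ioo_subset_Icc_self ht)
  have hρ (t) (ht : t ∈ Ioo σ₁ σ₂) : 0 < u t ^ 2 + v t ^ 2 :=
    sq_add_sq_pos_of_mul_sub_mul_ne_zero (by rw [hwronsk t ht]; exact hW.ne')
  obtain ⟨t₀, ht₀⟩ := nonempty_Ioo.2 hσ
  obtain ⟨θ, hθu, hθv⟩ := exists_eq_sqrt_mul_cos_and_sin (u t₀) (v t₀)
  set C := θ - ∫ s in σ₁..t₀, W / (u s ^ 2 + v s ^ 2)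
  set ψ := fun x => C + ∫ s in σ₁..x, W / (u s ^ 2 + v s ^ 2)
  refine ⟨C, fun t ht => ?_⟩
  have hψ (t) (ht : t ∈ Ioo σ₁ σ₂) : HasDerivAt ψ (W / (u t ^ 2 + v t ^ 2)) t :=
    (hasDerivAt_integral_div_sq_add_sq hu₁ hu₂ hv₁ hv₂ hqM hW.ne' hwronsk ht).const_add _
  have hpolar := eq_sqrt_mul_cos_and_sin_of_hasDerivAt_phase hI isPreconnected_Ioo hu₁ hv₁ hρ
    (fun t ht => by rw [hwronsk t ht]; exact hψ t ht) ht₀ (by simpa [ψ, C] using hθu)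
    (by simpa [ψ, C] using hθv) ht
  have hscale (c : ℝ) : √W * c / √(W / (u t ^ 2 + v t ^ 2)) = √(u t ^ 2 + v t ^ 2) * c := by
    have := (sqrt_pos.2 hW).ne'
    rw [sqrt_div hW.le]
    field_simp
  rw [(hψ t ht).deriv, hscale, hscale]
  exact hpolar
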